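/- arXiv:math/0411543 — 5 statements merged into one kernel-verified Lean document; each statement's English description precedes it below -/
import Mathlib

section
/- A monoidal abelian category (A, ⊠, I) is biadditive (i.e., all left and right multiplication functors L_A and R_A are additive) if and only if for all objects A, B, X, Y the canonical map A ⊠ X ⊠ B → A ⊠ (X̲ ⊕ Y) ⊠ B (induced by the inclusion i_X : X → X ⊕ Y followed by the cokernel projection) is an isomorphism. -/
open CategoryTheory Limits MonoidalCategory ZeroObject

section Aux

variable {C D : Type*} [Category C] [Category D] [Abelian C] [Abelian D] (F : C ⥤ D)

/-- For an additive functor, the canonical map `F X ⟶ coker (F inr)` is an iso. -/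
lemma aux_forward [F.Additive] (X Y : C) :
    IsIso (F.map (biprod.inl : X ⟶ X ⊞ Y) ≫
      cokernel.π (F.map (biprod.inr : Y ⟶ X ⊞ Y))) := by
  refine ⟨cokernel.desc _ (F.map biprod.fst)
    (by rw [← F.map_comp, biprod.inr_fst, F.map_zero]), ?_, ?_⟩
  · rw [Category.assoc, cokernel.π_desc, ← F.map_comp, biprod.inl_fst, F.map_id]
  · rw [← cancel_epi (cokernel.π (F.map (biprod.inr : Y ⟶ X ⊞ Y))), Category.comp_id,
      ← Category.assoc, ← Category.assoc, cokernel.π_desc, ← F.map_comp]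
    have h1 : (biprod.fst ≫ biprod.inl : X ⊞ Y ⟶ X ⊞ Y) = 𝟙 _ - biprod.snd ≫ biprod.inr := by
      rw [eq_sub_iff_add_eq, biprod.total]
    rw [h1, F.map_sub, F.map_id, F.map_comp, Preadditive.sub_comp, Category.id_comp,
      Category.assoc, cokernel.condition, Limits.comp_zero, sub_zero]

/-- The hypothesis of statement 5 is symmetric in the two biproduct summands. -/
lemma aux_symm (h : ∀ X Y : C, IsIso (F.map (biprod.inl : X ⟶ X ⊞ Y) ≫
      cokernel.π (F.map (biprod.inr : Y ⟶ X ⊞ Y)))) (X Y : C) :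
    IsIso (F.map (biprod.inr : Y ⟶ X ⊞ Y) ≫
      cokernel.π (F.map (biprod.inl : X ⟶ X ⊞ Y))) := by
  have hβl : (biprod.inl : Y ⟶ Y ⊞ X) ≫ (biprod.braiding Y X).hom = biprod.inr := by
    apply biprod.hom_ext <;> simp
  have hβr : (biprod.inr : X ⟶ Y ⊞ X) ≫ (biprod.braiding Y X).hom = biprod.inl := by
    apply biprod.hom_ext <;> simp
  let ψ : cokernel (F.map (biprod.inr : X ⟶ Y ⊞ X)) ≅
      cokernel (F.map (biprod.inl : X ⟶ X ⊞ Y)) :=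
    cokernel.mapIso _ _ (Iso.refl _) (F.mapIso (biprod.braiding Y X))
      (by rw [Iso.refl_hom, Category.id_comp, Functor.mapIso_hom, ← F.map_comp, hβr])
  have key : F.map (biprod.inr : Y ⟶ X ⊞ Y) ≫ cokernel.π (F.map (biprod.inl : X ⟶ X ⊞ Y))
      = (F.map (biprod.inl : Y ⟶ Y ⊞ X) ≫
          cokernel.π (F.map (biprod.inr : X ⟶ Y ⊞ X))) ≫ ψ.hom := by
    rw [← hβl, F.map_comp, Category.assoc, Category.assoc]
    congr 1
    simp [ψ]
  rw [key]
  have := h Y X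
  infer_instance

/-- A functor satisfying the hypothesis of statement 5 is additive. -/
lemma aux_backward (h : ∀ X Y : C, IsIso (F.map (biprod.inl : X ⟶ X ⊞ Y) ≫
      cokernel.π (F.map (biprod.inr : Y ⟶ X ⊞ Y)))) :
    F.Additive := by
  haveI hz : F.PreservesZeroMorphisms := by
    apply Functor.preservesZeroMorphisms_of_map_zero_object
    haveI : IsIso (biprod.inr : (0 : C) ⟶ 0 ⊞ 0) := by
      refine ⟨biprod.snd, biprod.inr_snd, ?_⟩
      apply biprod.hom_ext <;> exact (isZero_zero C).eq_of_tgt _ _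
    haveI : Epi (F.map (biprod.inr : (0 : C) ⟶ 0 ⊞ 0)) := by
      haveI : IsIso (F.map (biprod.inr : (0 : C) ⟶ 0 ⊞ 0)) := inferInstance
      infer_instance
    haveI := h (0 : C) (0 : C)
    exact asIso (F.map (biprod.inl : (0 : C) ⟶ 0 ⊞ 0) ≫
      cokernel.π (F.map (biprod.inr : (0 : C) ⟶ 0 ⊞ 0))) ≪≫ cokernel.ofEpi _
  constructor
  intro X Y f g
  haveI h1 := h X X
  haveI h2 := aux_symm F h X X
  set p := cokernel.π (F.map (biprod.inr : X ⟶ X ⊞ X)) with hp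
  set q := cokernel.π (F.map (biprod.inl : X ⟶ X ⊞ X)) with hq
  set e := F.map (biprod.inl : X ⟶ X ⊞ X) ≫ p with he
  set e' := F.map (biprod.inr : X ⟶ X ⊞ X) ≫ q with he'
  haveI : IsIso e := h1
  haveI : IsIso e' := h2
  set fst' := p ≫ inv e with hfst'
  set snd' := q ≫ inv e' with hsnd'
  clear_value fst' snd'
  have hlf : F.map (biprod.inl : X ⟶ X ⊞ X) ≫ fst' = 𝟙 _ := by
    rw [hfst', ← Category.assoc, ← he, IsIso.hom_inv_id]
  have hrf : F.map (biprod.inr : X ⟶ X ⊞ X) ≫ fst' = 0 := by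
    rw [hfst', ← Category.assoc, hp, cokernel.condition, zero_comp]
  have hls : F.map (biprod.inl : X ⟶ X ⊞ X) ≫ snd' = 0 := by
    rw [hsnd', ← Category.assoc, hq, cokernel.condition, zero_comp]
  have hrs : F.map (biprod.inr : X ⟶ X ⊞ X) ≫ snd' = 𝟙 _ := by
    rw [hsnd', ← Category.assoc, ← he', IsIso.hom_inv_id]
  have total : fst' ≫ F.map (biprod.inl : X ⟶ X ⊞ X) +
      snd' ≫ F.map (biprod.inr : X ⟶ X ⊞ X) = 𝟙 _ := by
    set t := 𝟙 (F.obj (X ⊞ X)) - (fst' ≫ F.map (biprod.inl : X ⟶ X ⊞ X) +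
      snd' ≫ F.map (biprod.inr : X ⟶ X ⊞ X)) with ht
    clear_value t
    have hinrt : F.map (biprod.inr : X ⟶ X ⊞ X) ≫ t = 0 := by
      simp only [ht, Preadditive.comp_sub, Preadditive.comp_add, Category.comp_id,
        reassoc_of% hrf, reassoc_of% hrs, zero_comp, Category.id_comp, zero_add, sub_self]
    set s := cokernel.desc _ t hinrt with hs
    clear_value s
    have hts : t = p ≫ s := by rw [hs, hp, cokernel.π_desc]
    have hes : e ≫ s = 0 := by
      rw [he, Category.assoc, ← hts]
      simp only [ht, Preadditive.comp_sub, Preadditive.comp_add, Category.comp_id,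
        reassoc_of% hlf, reassoc_of% hls, zero_comp, Category.id_comp, add_zero, sub_self]
    have hs0 : s = 0 := by
      have := congrArg (fun x => inv e ≫ x) hes
      simpa using this
    have ht0 : t = 0 := by rw [hts, hs0, comp_zero]
    rw [ht] at ht0
    exact (sub_eq_zero.mp ht0).symm
  have hFfst : F.map (biprod.fst : X ⊞ X ⟶ X) = fst' := by
    calc F.map (biprod.fst : X ⊞ X ⟶ X)
        = 𝟙 _ ≫ F.map biprod.fst := (Category.id_comp _).symm
      _ = (fst' ≫ F.map (biprod.inl : X ⟶ X ⊞ X) +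
            snd' ≫ F.map (biprod.inr : X ⟶ X ⊞ X)) ≫ F.map biprod.fst := by rw [total]
      _ = fst' ≫ F.map (biprod.inl ≫ biprod.fst) +
            snd' ≫ F.map (biprod.inr ≫ biprod.fst) := by
          rw [Preadditive.add_comp, Category.assoc, Category.assoc, F.map_comp, F.map_comp]
      _ = fst' := by
          rw [biprod.inl_fst, biprod.inr_fst, F.map_id, F.map_zero, Category.comp_id,
            comp_zero, add_zero]
  have hFsnd : F.map (biprod.snd : X ⊞ X ⟶ X) = snd' := by
    calc F.map (biprod.snd : X ⊞ X ⟶ X)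
        = 𝟙 _ ≫ F.map biprod.snd := (Category.id_comp _).symm
      _ = (fst' ≫ F.map (biprod.inl : X ⟶ X ⊞ X) +
            snd' ≫ F.map (biprod.inr : X ⟶ X ⊞ X)) ≫ F.map biprod.snd := by rw [total]
      _ = fst' ≫ F.map (biprod.inl ≫ biprod.snd) +
            snd' ≫ F.map (biprod.inr ≫ biprod.snd) := by
          rw [Preadditive.add_comp, Category.assoc, Category.assoc, F.map_comp, F.map_comp]
      _ = snd' := by
          rw [biprod.inl_snd, biprod.inr_snd, F.map_id, F.map_zero, Category.comp_id,
            comp_zero, zero_add]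
  have key : F.map (biprod.desc f g) = fst' ≫ F.map f + snd' ≫ F.map g := by
    calc F.map (biprod.desc f g)
        = 𝟙 _ ≫ F.map (biprod.desc f g) := (Category.id_comp _).symm
      _ = (fst' ≫ F.map (biprod.inl : X ⟶ X ⊞ X) +
            snd' ≫ F.map (biprod.inr : X ⟶ X ⊞ X)) ≫ F.map (biprod.desc f g) := by rw [total]
      _ = fst' ≫ F.map (biprod.inl ≫ biprod.desc f g) +
            snd' ≫ F.map (biprod.inr ≫ biprod.desc f g) := by
          rw [Preadditive.add_comp, Category.assoc, Category.assoc, F.map_comp, F.map_comp]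
      _ = fst' ≫ F.map f + snd' ≫ F.map g := by rw [biprod.inl_desc, biprod.inr_desc]
  have hfg : f + g = biprod.lift (𝟙 X) (𝟙 X) ≫ biprod.desc f g := by
    rw [biprod.lift_desc, Category.id_comp, Category.id_comp]
  have e3 : F.map (biprod.lift (𝟙 X) (𝟙 X)) ≫ F.map (biprod.fst : X ⊞ X ⟶ X) = 𝟙 _ := by
    rw [← F.map_comp, biprod.lift_fst, F.map_id]
  have e4 : F.map (biprod.lift (𝟙 X) (𝟙 X)) ≫ F.map (biprod.snd : X ⊞ X ⟶ X) = 𝟙 _ := by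
    rw [← F.map_comp, biprod.lift_snd, F.map_id]
  rw [hfg, F.map_comp, key, Preadditive.comp_add, ← Category.assoc, ← Category.assoc,
    ← hFfst, ← hFsnd, e3, e4, Category.id_comp, Category.id_comp]

end Aux

/-- a monoidal abelian category is biadditive (all left and right
multiplication functors are additive) if and only if for all objects
`A, B, X, Y` the canonical map `A ⊠ X ⊠ B ⟶ A ⊠ (X̲ ⊕ Y) ⊠ B`, induced by the
inclusion `i_X` followed by the cokernel projection defining the multilinear
part, is an isomorphism. -/
theorem statement5 {𝒜 : Type*} [Category 𝒜] [Abelian 𝒜] [MonoidalCategory 𝒜] :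
    ((∀ X : 𝒜, (tensorLeft X).Additive) ∧ (∀ X : 𝒜, (tensorRight X).Additive)) ↔
      ∀ A B X Y : 𝒜,
        IsIso ((A ◁ ((biprod.inl : X ⟶ X ⊞ Y) ▷ B)) ≫
          cokernel.π (A ◁ ((biprod.inr : Y ⟶ X ⊞ Y) ▷ B))) := by
  constructor
  · rintro ⟨hL, hR⟩ A B X Y
    haveI := hL A
    haveI := hR B
    haveI : (tensorRight B ⋙ tensorLeft A).Additive := Functor.instAdditiveComp _ _
    have := aux_forward (tensorRight B ⋙ tensorLeft A) X Y
    simpa using this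
  · intro h
    constructor
    · intro A
      haveI : (tensorRight (𝟙_ 𝒜) ⋙ tensorLeft A).Additive :=
        aux_backward _ (fun X Y => by simpa using h A (𝟙_ 𝒜) X Y)
      exact Functor.additive_of_iso
        (Functor.isoWhiskerRight (rightUnitorNatIso 𝒜) (tensorLeft A) ≪≫
          Functor.leftUnitor (tensorLeft A))
    · intro B
      haveI : (tensorRight B ⋙ tensorLeft (𝟙_ 𝒜)).Additive :=
        aux_backward _ (fun X Y => by simpa using h (𝟙_ 𝒜) B X Y)
      exact Functor.additive_of_iso
        (Functor.isoWhiskerLeft (tensorRight B) (leftUnitorNatIso 𝒜) ≪≫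
          Functor.rightUnitor (tensorRight B))
end

section
/- Let (A, ⊠, I) be a monoidal abelian category whose monoidal product preserves reflexive coequalizers. Let V, W be objects and ι_A : A ↪ W, ι_B : B ↪ W subobjects of W. Then Im(V ⊠ ((A+B)̲ ⊕ W)) = Im(V ⊠ (A̲ ⊕ W)) + Im(V ⊠ (B̲ ⊕ W)) as subobjects of V ⊠ W, where Im(V ⊠ (A̲ ⊕ W)) denotes the image of the composite V ⊠ (A̲ ⊕ W) ↪ V ⊠ (A ⊕ W) → V ⊠ W, the second map being V ⊠ (ι_A + id_W). -/
/-!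
Let `Φ ι = V ◁ (ι + id_W) - V ◁ π_W` (`mImageMap V ι`). As `π_W` and `ι + id_W` are both
split by the inclusion of `W`, `Φ ι` has the same image as the restriction of
`V ◁ (ι + id_W)` to the multilinear part. Precomposing with `V ◁ (f ⊞ id_W)` turns `Φ ι` into
`Φ (f ≫ ι)`, so `mImage V` is monotone along factorizations of `ι`, and invariant under
epimorphic ones because `V ⊗ -` preserves epimorphisms (an epimorphism is the coequalizer of
a reflexive pair). Finally `A + B` is the image of `[ιA, ιB] : A ⊞ B ⟶ W`, and `Φ [ιA, ιB]`
is a sum of `Φ ιA` and `Φ ιB`, each precomposed with a map out of `V ⊗ ((A ⊞ B) ⊞ W)`.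
-/

open CategoryTheory Limits MonoidalCategory

/-- A functor preserves reflexive coequalizers if it preserves coequalizers of
every reflexive pair. -/
def PreservesReflexiveCoequalizersFun {𝒜 : Type*} [Category 𝒜] {ℬ : Type*} [Category ℬ]
    (Γ : 𝒜 ⥤ ℬ) : Prop :=
  ∀ ⦃X Y : 𝒜⦄ (d₀ d₁ : X ⟶ Y), IsReflexivePair d₀ d₁ →
    PreservesColimit (parallelPair d₀ d₁) Γ

/-- For a subobject `ι : A ↪ W`, this is the subobject
`Im (V ⊠ (A̲ ⊕ W)) ⊆ V ⊠ W`: the image of the composite of the inclusion of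
the multilinear part `V ⊠ (A̲ ⊕ W) = ker (V ⊠ π_W)` into `V ⊠ (A ⊕ W)`
with `V ⊠ (ι + id_W) : V ⊠ (A ⊕ W) ⟶ V ⊠ W`. -/
noncomputable def mImage {𝒜 : Type*} [Category 𝒜] [Abelian 𝒜] [MonoidalCategory 𝒜]
    (V : 𝒜) {A W : 𝒜} (ι : A ⟶ W) : Subobject (V ⊗ W) :=
  imageSubobject
    (kernel.ι (V ◁ (biprod.snd : A ⊞ W ⟶ W)) ≫ (V ◁ biprod.desc ι (𝟙 W)))

section Abelian

variable {𝒜 : Type*} [Category 𝒜] [Abelian 𝒜]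

theorem imageSubobject_comp_eq_of_epi {X' X Y : 𝒜} (h : X' ⟶ X) [Epi h] (f : X ⟶ Y) :
    imageSubobject (h ≫ f) = imageSubobject f := by
  have : IsIso (image.preComp h f) := isIso_of_mono_of_epi _
  exact le_antisymm (imageSubobject_comp_le h f)
    (Subobject.mk_le_mk_of_comm (inv (image.preComp h f)) (by simp))

theorem imageSubobject_add_le {X Y : 𝒜} (u v : X ⟶ Y) :
    imageSubobject (u + v) ≤ imageSubobject u ⊔ imageSubobject v :=
  imageSubobject_le _
    (factorThruImageSubobject u ≫ Subobject.ofLE _ _ le_sup_left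
      + factorThruImageSubobject v ≫ Subobject.ofLE _ _ le_sup_right)
    (by simp)

theorem Subobject.mk_sup_mk_eq_imageSubobject_biprod_desc {A B W : 𝒜} (ιA : A ⟶ W)
    (ιB : B ⟶ W) [Mono ιA] [Mono ιB] :
    Subobject.mk ιA ⊔ Subobject.mk ιB = imageSubobject (biprod.desc ιA ιB) := by
  refine le_antisymm (sup_le ?_ ?_) ?_
  · exact Subobject.mk_le_of_comm (biprod.inl ≫ factorThruImageSubobject _) (by simp)
  · exact Subobject.mk_le_of_comm (biprod.inr ≫ factorThruImageSubobject _) (by simp)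
  · exact imageSubobject_le _
      (biprod.desc (Subobject.ofMkLE ιA _ le_sup_left) (Subobject.ofMkLE ιB _ le_sup_right))
      (by ext <;> simp)

/-- If `r` splits `σ` and `r ≫ g = 𝟙`, then `g - σ` factors through the kernel of `σ`
via the projection `𝟙 - σ ≫ r`, on which it agrees with `g`. -/
theorem imageSubobject_kernel_ι_comp_eq_sub {X Y : 𝒜} (σ g : X ⟶ Y) (r : Y ⟶ X)
    (hσ : r ≫ σ = 𝟙 Y) (hg : r ≫ g = 𝟙 Y) :
    imageSubobject (kernel.ι σ ≫ g) = imageSubobject (g - σ) := by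
  have hκ : kernel.ι σ ≫ (g - σ) = kernel.ι σ ≫ g := by simp
  have hp : (𝟙 X - σ ≫ r) ≫ σ = 0 := by simp [hσ]
  have hfac : kernel.lift σ _ hp ≫ kernel.ι σ ≫ g = g - σ := by simp [hg]
  refine le_antisymm ?_ ?_
  · rw [← hκ]
    exact imageSubobject_comp_le _ _
  · rw [← hfac]
    exact imageSubobject_comp_le _ _

theorem PreservesReflexiveCoequalizersFun.map_epi {ℬ : Type*} [Category ℬ] {F : 𝒜 ⥤ ℬ}
    (hF : PreservesReflexiveCoequalizersFun F) {X Y : 𝒜} (e : X ⟶ Y) [Epi e] :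
    Epi (F.map e) := by
  let d₀ : kernel e ⊞ X ⟶ X := biprod.desc (kernel.ι e) (𝟙 X)
  let d₁ : kernel e ⊞ X ⟶ X := biprod.snd
  have hrefl : IsReflexivePair d₀ d₁ :=
    IsReflexivePair.mk' biprod.inr (by simp [d₀]) (by simp [d₁])
  have hw : d₀ ≫ e = d₁ ≫ e := by ext <;> simp [d₀, d₁]
  have hc : IsColimit (Cofork.ofπ e hw) :=
    Cofork.IsColimit.mk _ (fun s => Abelian.epiDesc e s.π (by simpa [d₀, d₁] using
        biprod.inl ≫= s.condition))
      (fun s => by simp) (fun s m hm => by rw [← cancel_epi e]; simpa using hm)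
  have := hF d₀ d₁ hrefl
  have hFc := isColimitCoforkMapOfIsColimit F hw hc
  exact ⟨fun u v huv => Cofork.IsColimit.hom_ext hFc (by simpa using huv)⟩

end Abelian

section MImage

variable {𝒜 : Type*} [Category 𝒜] [Abelian 𝒜] [MonoidalCategory 𝒜] (V : 𝒜)

noncomputable def mImageMap {A W : 𝒜} (ι : A ⟶ W) : V ⊗ (A ⊞ W) ⟶ V ⊗ W :=
  V ◁ biprod.desc ι (𝟙 W) - V ◁ biprod.snd

theorem mImage_eq_imageSubobject_mImageMap {A W : 𝒜} (ι : A ⟶ W) :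
    mImage V ι = imageSubobject (mImageMap V ι) :=
  imageSubobject_kernel_ι_comp_eq_sub _ _ (V ◁ biprod.inr)
    (by simp [← MonoidalCategory.whiskerLeft_comp])
    (by simp [← MonoidalCategory.whiskerLeft_comp])

theorem whiskerLeft_biprod_map_comp_mImageMap {A' A W : 𝒜} (f : A' ⟶ A) (ι : A ⟶ W) :
    V ◁ biprod.map f (𝟙 W) ≫ mImageMap V ι = mImageMap V (f ≫ ι) := by
  simp only [mImageMap, Preadditive.comp_sub, ← MonoidalCategory.whiskerLeft_comp]
  congr 2 <;> ext <;> simp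

theorem mImage_comp_le {A' A W : 𝒜} (f : A' ⟶ A) (ι : A ⟶ W) :
    mImage V (f ≫ ι) ≤ mImage V ι := by
  simp only [mImage_eq_imageSubobject_mImageMap, ← whiskerLeft_biprod_map_comp_mImageMap]
  exact imageSubobject_comp_le _ _

theorem mImage_comp_of_epi (hV : PreservesReflexiveCoequalizersFun (tensorLeft V))
    {A' A W : 𝒜} (f : A' ⟶ A) [Epi f] (ι : A ⟶ W) :
    mImage V (f ≫ ι) = mImage V ι := by
  have : Epi (V ◁ biprod.map f (𝟙 W)) := hV.map_epi (biprod.map f (𝟙 W))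
  simp only [mImage_eq_imageSubobject_mImageMap, ← whiskerLeft_biprod_map_comp_mImageMap]
  exact imageSubobject_comp_eq_of_epi _ _

theorem mImage_biprod_desc_le {A B W : 𝒜} (ιA : A ⟶ W) (ιB : B ⟶ W) :
    mImage V (biprod.desc ιA ιB) ≤ mImage V ιA ⊔ mImage V ιB := by
  let pA : (A ⊞ B) ⊞ W ⟶ A ⊞ W :=
    biprod.lift (biprod.fst ≫ biprod.fst) (biprod.desc (biprod.snd ≫ ιB) (𝟙 W))
  let pB : (A ⊞ B) ⊞ W ⟶ B ⊞ W := biprod.map biprod.snd (𝟙 W)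
  have hsplit : mImageMap V (biprod.desc ιA ιB) =
      V ◁ pA ≫ mImageMap V ιA + V ◁ pB ≫ mImageMap V ιB := by
    have hdesc : pA ≫ biprod.desc ιA (𝟙 W) = biprod.desc (biprod.desc ιA ιB) (𝟙 W) := by
      ext <;> simp [pA]
    have hsnd : pA ≫ biprod.snd = pB ≫ biprod.desc ιB (𝟙 W) := by ext <;> simp [pA, pB]
    simp only [mImageMap, Preadditive.comp_sub, ← MonoidalCategory.whiskerLeft_comp, hdesc,
      hsnd]
    simp [pB]
  simp only [mImage_eq_imageSubobject_mImageMap, hsplit]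
  exact (imageSubobject_add_le _ _).trans
    (sup_le_sup (imageSubobject_comp_le _ _) (imageSubobject_comp_le _ _))

end MImage

theorem statement6_general {𝒜 : Type*} [Category 𝒜] [Abelian 𝒜] [MonoidalCategory 𝒜]
    (hL : ∀ X : 𝒜, PreservesReflexiveCoequalizersFun (tensorLeft X))
    (V : 𝒜) {A B W : 𝒜} (ιA : A ⟶ W) (ιB : B ⟶ W) [Mono ιA] [Mono ιB] :
    mImage V ((Subobject.mk ιA ⊔ Subobject.mk ιB).arrow) =
      mImage V ιA ⊔ mImage V ιB := by
  refine le_antisymm ?_ (sup_le ?_ ?_)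
  · rw [Subobject.mk_sup_mk_eq_imageSubobject_biprod_desc,
      ← mImage_comp_of_epi V (hL V) (factorThruImageSubobject _), imageSubobject_arrow_comp]
    exact mImage_biprod_desc_le V ιA ιB
  · simpa using
      mImage_comp_le V (Subobject.ofMkLE ιA _ le_sup_left) (_ ⊔ Subobject.mk ιB).arrow
  · simpa using
      mImage_comp_le V (Subobject.ofMkLE ιB _ le_sup_right) (Subobject.mk ιA ⊔ _).arrow

/-- if the monoidal product of a monoidal abelian category preserves
reflexive coequalizers, then for subobjects `A, B ↪ W`,
`Im(V ⊠ ((A+B)̲ ⊕ W)) = Im(V ⊠ (A̲ ⊕ W)) + Im(V ⊠ (B̲ ⊕ W))`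
as subobjects of `V ⊠ W`. -/
theorem statement6 {𝒜 : Type*} [Category 𝒜] [Abelian 𝒜] [MonoidalCategory 𝒜]
    (hL : ∀ X : 𝒜, PreservesReflexiveCoequalizersFun (tensorLeft X))
    (hR : ∀ X : 𝒜, PreservesReflexiveCoequalizersFun (tensorRight X))
    (V : 𝒜) {A B W : 𝒜} (ιA : A ⟶ W) (ιB : B ⟶ W) [Mono ιA] [Mono ιB] :
    mImage V ((Subobject.mk ιA ⊔ Subobject.mk ιB).arrow) =
      mImage V ιA ⊔ mImage V ιB :=
  statement6_general hL V ιA ιB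
end

section
/- Let (A, ⊠, I) be a monoidal abelian category whose monoidal product preserves reflexive coequalizers, V an object, A ↪ W a subobject with cokernel π : W → W/A. Then the kernel of V ⊠ π : V ⊠ W → V ⊠ (W/A) equals the image of the composite V ⊠ (A̲ ⊕ W) ↪ V ⊠ (A ⊕ W) → V ⊠ W induced by V ⊠ (ι_A + id_W). -/
/-!
The quotient map `π : W ⟶ W/A` is the coequalizer of the reflexive pair
`ι + id, π_W : A ⊕ W ⇉ W` (with common section the inclusion of `W`). Since `V ⊠ -` preserves
reflexive coequalizers, `V ⊠ π` is the cokernel of `V ⊠ (ι + id) - V ⊠ π_W`, so by exactness its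
kernel is the image of that difference. Finally, for any reflexive pair `d₀, d₁` with common
section `s`, the difference `d₀ - d₁` factors as `(1 - d₁ ≫ s)` (which lands in `ker d₁`) followed
by `d₀`, so it has the same image as `d₀` restricted to `ker d₁`.
-/

open CategoryTheory Limits MonoidalCategory

namespace CategoryTheory

variable {C : Type*} [Category C]

theorem IsReflexivePair.map {D : Type*} [Category D] (F : C ⥤ D) {X Y : C} (f g : X ⟶ Y)
    [IsReflexivePair f g] : IsReflexivePair (F.map f) (F.map g) :=
  IsReflexivePair.mk' (F.map (commonSection f g))
    (by rw [← F.map_comp, section_comp_left, F.map_id])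
    (by rw [← F.map_comp, section_comp_right, F.map_id])

section Preadditive

variable [Preadditive C] {A W : C} (ι : A ⟶ W) [HasBinaryBiproduct A W]

instance isReflexivePair_biprod_desc_snd :
    IsReflexivePair (biprod.desc ι (𝟙 W)) (biprod.snd : A ⊞ W ⟶ W) :=
  IsReflexivePair.mk' biprod.inr (by simp) (by simp)

variable [HasCokernel ι]

theorem Limits.biprod.desc_comp_cokernel_π :
    biprod.desc ι (𝟙 W) ≫ cokernel.π ι = biprod.snd ≫ cokernel.π ι := by
  ext <;> simp

noncomputable def isColimitCokernelCoforkBiprodDescSnd :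
    IsColimit (Cofork.ofπ (cokernel.π ι) (biprod.desc_comp_cokernel_π ι)) :=
  Cofork.IsColimit.mk' _ fun s =>
    have hs : ι ≫ s.π = 0 := by
      simpa using biprod.inl ≫= s.condition
    ⟨cokernel.desc ι s.π hs, by simp, fun hm => by
      rw [← cancel_epi (cokernel.π ι)]
      simpa using hm⟩

end Preadditive

section Abelian

variable [Abelian C] {X Y Z : C}

theorem kernelSubobject_eq_imageSubobject_sub_of_isColimit (d₀ d₁ : X ⟶ Y) (π : Y ⟶ Z)
    (w : d₀ ≫ π = d₁ ≫ π) (hπ : IsColimit (Cofork.ofπ π w)) :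
    kernelSubobject π = imageSubobject (d₀ - d₁) := by
  have hw : (d₀ - d₁) ≫ π = 0 := by rw [Preadditive.sub_comp, w, sub_self]
  have hcoker : IsColimit (CokernelCofork.ofπ π hw) := by
    simpa only [Preadditive.cokernelCoforkOfCofork_ofπ] using
      Preadditive.isColimitCokernelCoforkOfCofork hπ
  exact ((ShortComplex.exact_iff_image_eq_kernel _).1
    (ShortComplex.exact_of_g_is_cokernel (ShortComplex.mk _ _ hw) hcoker)).symm

theorem imageSubobject_sub_eq_imageSubobject_kernel_ι_comp (d₀ d₁ : X ⟶ Y)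
    [IsReflexivePair d₀ d₁] :
    imageSubobject (d₀ - d₁) = imageSubobject (kernel.ι d₁ ≫ d₀) := by
  let s := commonSection d₀ d₁
  let r : X ⟶ kernel d₁ := kernel.lift d₁ (𝟙 X - d₁ ≫ s) (by
    rw [Preadditive.sub_comp, Category.assoc, section_comp_right]; simp)
  have hr : r ≫ kernel.ι d₁ ≫ d₀ = d₀ - d₁ := by
    rw [kernel.lift_ι_assoc, Preadditive.sub_comp, Category.assoc, section_comp_left]; simp
  have hk : kernel.ι d₁ ≫ (d₀ - d₁) = kernel.ι d₁ ≫ d₀ := by simp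
  refine le_antisymm ?_ ?_
  · simpa only [hr] using imageSubobject_comp_le r (kernel.ι d₁ ≫ d₀)
  · simpa only [hk] using imageSubobject_comp_le (kernel.ι d₁) (d₀ - d₁)

end Abelian

end CategoryTheory

theorem statement7_general {𝒜 : Type*} [Category 𝒜] [Abelian 𝒜] [MonoidalCategory 𝒜]
    (hL : ∀ X : 𝒜, PreservesReflexiveCoequalizersFun (tensorLeft X))
    (V : 𝒜) {A W : 𝒜} (ι : A ⟶ W) :
    kernelSubobject (V ◁ cokernel.π ι) =
      imageSubobject
        (kernel.ι (V ◁ (biprod.snd : A ⊞ W ⟶ W)) ≫ (V ◁ biprod.desc ι (𝟙 W))) := by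
  have := hL V _ _ (isReflexivePair_biprod_desc_snd ι)
  have := IsReflexivePair.map (tensorLeft V) (biprod.desc ι (𝟙 W)) biprod.snd
  have hcoeq :=
    isColimitCoforkMapOfIsColimit (tensorLeft V) _ (isColimitCokernelCoforkBiprodDescSnd ι)
  exact (kernelSubobject_eq_imageSubobject_sub_of_isColimit _ _ _ _ hcoeq).trans
    (imageSubobject_sub_eq_imageSubobject_kernel_ι_comp _ _)

/-- if the monoidal product preserves reflexive coequalizers, then
for a subobject `ι : A ↪ W` with quotient `π : W ⟶ W/A`, the kernel of
`V ⊠ π` coincides with the image of the composite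
`V ⊠ (A̲ ⊕ W) ↪ V ⊠ (A ⊕ W) ⟶ V ⊠ W` induced by `V ⊠ (ι + id_W)`,
where `V ⊠ (A̲ ⊕ W) = ker (V ⊠ π_W)` is the multilinear part. -/
theorem statement7 {𝒜 : Type*} [Category 𝒜] [Abelian 𝒜] [MonoidalCategory 𝒜]
    (hL : ∀ X : 𝒜, PreservesReflexiveCoequalizersFun (tensorLeft X))
    (hR : ∀ X : 𝒜, PreservesReflexiveCoequalizersFun (tensorRight X))
    (V : 𝒜) {A W : 𝒜} (ι : A ⟶ W) [Mono ι] :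
    kernelSubobject (V ◁ cokernel.π ι) =
      imageSubobject
        (kernel.ι (V ◁ (biprod.snd : A ⊞ W ⟶ W)) ≫ (V ◁ biprod.desc ι (𝟙 W))) :=
  statement7_general hL V ι
end

section
/- Let f : A → A be a split analytic functor, f = ⊕_{n≥0} f_n ∘ Δ_n with each f_n : A^n → A additive in each variable, such that for every n, every i ∈ {1,…,n}, and all fixed objects X₁,…,X_{i−1},X_{i+1},…,X_n, the functor X ↦ f_n(X₁,…,X_{i−1},X,X_{i+1},…,X_n) preserves reflexive coequalizers. Then f preserves reflexive coequalizers. -/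
open CategoryTheory Limits

/-- The partial functor of a functor of `n` variables: all variables except the
`i`-th are frozen at the objects `X j`. -/
def partialFunctor {𝒜 : Type*} [Category 𝒜] {n : ℕ}
    (G : (∀ _ : Fin n, 𝒜) ⥤ 𝒜) (X : Fin n → 𝒜) (i : Fin n) : 𝒜 ⥤ 𝒜 :=
  Functor.pi' (fun j => if j = i then 𝟭 𝒜 else (Functor.const 𝒜).obj (X j)) ⋙ G


lemma preservesColimit_colimit_functor {𝒜 : Type*} [Category 𝒜]
    {J : Type*} [Category J] {K : Type*} [Category K]
    {ℬ : Type*} [Category ℬ] [HasColimitsOfShape J ℬ]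
    (H : J ⥤ 𝒜 ⥤ ℬ) (Gd : K ⥤ 𝒜)
    (h : ∀ j, PreservesColimit Gd (H.obj j)) :
    PreservesColimit Gd (colimit H) := by
  haveI h1 : PreservesColimit Gd H.flip :=
    preservesColimit_of_evaluation _ _ fun j => by
      haveI := h j
      exact preservesColimit_of_natIso Gd (flipCompEvaluation H j).symm
  haveI h2 : PreservesColimit Gd (H.flip ⋙ colim) := inferInstance
  exact preservesColimit_of_natIso Gd (colimitIsoFlipCompColim H).symm


lemma bifunctor_preservesColimit {𝒜 : Type*} [Category 𝒜] {𝒞 : Type*} [Category 𝒞]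
    (U : 𝒜 × 𝒜 ⥤ 𝒞) {X Y : 𝒜} (d₀ d₁ : X ⟶ Y) (hp : IsReflexivePair d₀ d₁)
    [HasColimit (parallelPair d₀ d₁)]
    (h1 : ∀ A : 𝒜, PreservesColimit (parallelPair d₀ d₁) (Prod.sectR A 𝒜 ⋙ U))
    (h2 : ∀ B : 𝒜, PreservesColimit (parallelPair d₀ d₁) (Prod.sectL 𝒜 B ⋙ U)) :
    PreservesColimit (parallelPair d₀ d₁) (Functor.diag 𝒜 ⋙ U) := by
  haveI := hp
  set s : Y ⟶ X := commonSection d₀ d₁ with hsdef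
  have hs₀ : s ≫ d₀ = 𝟙 Y := section_comp_left d₀ d₁
  have hs₁ : s ≫ d₁ = 𝟙 Y := section_comp_right d₀ d₁
  set Q : 𝒜 := coequalizer d₀ d₁ with hQdef
  set q : Y ⟶ Q := coequalizer.π d₀ d₁ with hqdef
  have hw : d₀ ≫ q = d₁ ≫ q := coequalizer.condition d₀ d₁
  haveI := h1 Y; haveI := h1 X; haveI := h2 Q
  have EY := isColimitCoforkMapOfIsColimit (Prod.sectR Y 𝒜 ⋙ U) hw
    (coequalizerIsCoequalizer d₀ d₁)
  have EQ := isColimitCoforkMapOfIsColimit (Prod.sectL 𝒜 Q ⋙ U) hw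
    (coequalizerIsCoequalizer d₀ d₁)
  have EX := isColimitCoforkMapOfIsColimit (Prod.sectR X 𝒜 ⋙ U) hw
    (coequalizerIsCoequalizer d₀ d₁)
  -- epis
  haveI epiYq : Epi (U.map ((Prod.sectR Y 𝒜).map q)) :=
    ⟨fun u v e => Cofork.IsColimit.hom_ext EY e⟩
  haveI epiXq : Epi (U.map ((Prod.sectR X 𝒜).map q)) :=
    ⟨fun u v e => Cofork.IsColimit.hom_ext EX e⟩
  haveI epiQq : Epi (U.map ((Prod.sectL 𝒜 Q).map q)) :=
    ⟨fun u v e => Cofork.IsColimit.hom_ext EQ e⟩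
  -- decomposition of the diagonal of q
  have dec2 : (Functor.diag 𝒜).map q = (Prod.sectR Y 𝒜).map q ≫ (Prod.sectL 𝒜 Q).map q :=
    Prod.ext (Category.id_comp q).symm (Category.comp_id q).symm
  have decU : (Functor.diag 𝒜 ⋙ U).map q
      = U.map ((Prod.sectR Y 𝒜).map q) ≫ U.map ((Prod.sectL 𝒜 Q).map q) := by
    show U.map ((Functor.diag 𝒜).map q) = _
    exact (congrArg U.map dec2).trans (U.map_comp _ _)
  haveI epiDq : Epi ((Functor.diag 𝒜 ⋙ U).map q) := by
    rw [decU]; exact @epi_comp _ _ _ _ _ _ epiYq _ epiQq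
  -- commutation helpers
  have t0 : ∀ (d : X ⟶ Y), s ≫ d = 𝟙 Y →
      (Prod.sectL 𝒜 X).map s ≫ (Functor.diag 𝒜).map d = (Prod.sectR Y 𝒜).map d := by
    intro d hs
    exact Prod.ext hs (Category.id_comp d)
  have t1 : ∀ (d : X ⟶ Y), s ≫ d = 𝟙 Y →
      (Prod.sectR X 𝒜).map s ≫ (Functor.diag 𝒜).map d = (Prod.sectL 𝒜 Y).map d := by
    intro d hs
    exact Prod.ext (Category.id_comp d) hs
  have comm : ∀ d : X ⟶ Y,
      (Prod.sectR X 𝒜).map q ≫ (Prod.sectL 𝒜 Q).map d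
        = (Prod.sectL 𝒜 Y).map d ≫ (Prod.sectR Y 𝒜).map q :=
    fun d => Prod.ext ((Category.id_comp d).trans (Category.comp_id d).symm)
      ((Category.comp_id q).trans (Category.id_comp q).symm)
  suffices main : IsColimit (Cofork.ofπ ((Functor.diag 𝒜 ⋙ U).map q)
      (by rw [← Functor.map_comp, ← Functor.map_comp, hw]) :
      Cofork ((Functor.diag 𝒜 ⋙ U).map d₀) ((Functor.diag 𝒜 ⋙ U).map d₁)) by
    exact preservesColimit_of_preserves_colimit_cocone (coequalizerIsCoequalizer d₀ d₁)
      ((isColimitMapCoconeCoforkEquiv (Functor.diag 𝒜 ⋙ U) hw).symm main)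
  refine Cofork.IsColimit.mk' _ (fun c => ?_)
  have hc : U.map ((Functor.diag 𝒜).map d₀) ≫ c.π = U.map ((Functor.diag 𝒜).map d₁) ≫ c.π :=
    c.condition
  -- step 1 : `c.π` coequalizes `U (𝟙 Y, d₀)` and `U (𝟙 Y, d₁)`
  have step1 : U.map ((Prod.sectR Y 𝒜).map d₀) ≫ c.π
      = U.map ((Prod.sectR Y 𝒜).map d₁) ≫ c.π := by
    erw [← t0 d₀ hs₀, ← t0 d₁ hs₁, U.map_comp, U.map_comp, Category.assoc, Category.assoc, hc]
    rfl
  -- factor through `U (Y, Q)`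
  set h₁ : U.obj ((Y, Q) : 𝒜 × 𝒜) ⟶ c.pt := EY.desc (Cofork.ofπ c.π step1) with hh₁
  have hπ₁ : U.map ((Prod.sectR Y 𝒜).map q) ≫ h₁ = c.π :=
    EY.fac (Cofork.ofπ c.π step1) WalkingParallelPair.one
  -- step 2 : `c.π` coequalizes `U (d₀, 𝟙 Y)` and `U (d₁, 𝟙 Y)`
  have step2 : U.map ((Prod.sectL 𝒜 Y).map d₀) ≫ c.π
      = U.map ((Prod.sectL 𝒜 Y).map d₁) ≫ c.π := by
    erw [← t1 d₀ hs₀, ← t1 d₁ hs₁, U.map_comp, U.map_comp, Category.assoc, Category.assoc, hc]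
    rfl
  -- step 3 : `h₁` coequalizes `U (d₀, 𝟙 Q)` and `U (d₁, 𝟙 Q)`
  have step3 : U.map ((Prod.sectL 𝒜 Q).map d₀) ≫ h₁
      = U.map ((Prod.sectL 𝒜 Q).map d₁) ≫ h₁ := by
    refine (cancel_epi (U.map ((Prod.sectR X 𝒜).map q))).1 ?_
    have key : ∀ d : X ⟶ Y, U.map ((Prod.sectR X 𝒜).map q) ≫ U.map ((Prod.sectL 𝒜 Q).map d) ≫ h₁
        = U.map ((Prod.sectL 𝒜 Y).map d) ≫ c.π := fun d =>
      (Category.assoc _ _ _).symm.trans ((congrArg (· ≫ h₁) ((U.map_comp _ _).symm.trans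
        ((congrArg U.map (comm d)).trans (U.map_comp _ _)))).trans
        ((Category.assoc _ _ _).trans (congrArg (U.map ((Prod.sectL 𝒜 Y).map d) ≫ ·) hπ₁)))
    exact (key d₀).trans (step2.trans (key d₁).symm)
  -- the descended morphism
  set l : U.obj ((Q, Q) : 𝒜 × 𝒜) ⟶ c.pt := EQ.desc (Cofork.ofπ h₁ step3) with hl
  have hπ₂ : U.map ((Prod.sectL 𝒜 Q).map q) ≫ l = h₁ :=
    EQ.fac (Cofork.ofπ h₁ step3) WalkingParallelPair.one
  have hfac : (Functor.diag 𝒜 ⋙ U).map q ≫ l = c.π := by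
    erw [decU, Category.assoc, hπ₂, hπ₁]
  refine ⟨l, hfac, fun {m} hm => ?_⟩
  rw [← cancel_epi ((Functor.diag 𝒜 ⋙ U).map q)]
  exact hm.trans hfac.symm

/-- The functor `𝒜 × 𝒜 ⥤ ∀ _ : Fin (n+1), 𝒜` putting the first coordinate in slot `0`
and the second coordinate in all the other slots. -/
def prodToPi (𝒜 : Type*) [Category 𝒜] (n : ℕ) : 𝒜 × 𝒜 ⥤ (∀ _ : Fin (n + 1), 𝒜) :=
  Functor.pi' (fun j => if j = 0 then CategoryTheory.Prod.fst 𝒜 𝒜 else CategoryTheory.Prod.snd 𝒜 𝒜)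

/-- The functor `(∀ _ : Fin n, 𝒜) ⥤ ∀ _ : Fin (n+1), 𝒜` inserting the object `A` in slot `0`. -/
def insF {𝒜 : Type*} [Category 𝒜] (n : ℕ) (A : 𝒜) :
    (∀ _ : Fin n, 𝒜) ⥤ (∀ _ : Fin (n + 1), 𝒜) :=
  Functor.pi' (fun j => if h : j = 0 then (Functor.const _).obj A
    else Pi.eval (fun _ : Fin n => 𝒜) (j.pred h))

section PiEq

variable {𝒜 : Type*} [Category 𝒜] {n : ℕ}

lemma P4 : Functor.diag 𝒜 ⋙ prodToPi 𝒜 n = Functor.pi' (fun _ : Fin (n + 1) => 𝟭 𝒜) := by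
  apply Functor.pi_ext
  intro j
  rw [Functor.assoc, prodToPi, Functor.pi'_eval, Functor.pi'_eval]
  by_cases h : j = 0
  · rw [if_pos h]; rfl
  · rw [if_neg h]; rfl

lemma P1 (B : 𝒜) : Prod.sectL 𝒜 B ⋙ prodToPi 𝒜 n
    = Functor.pi' (fun j : Fin (n + 1) =>
        if j = 0 then 𝟭 𝒜 else (Functor.const 𝒜).obj B) := by
  apply Functor.pi_ext
  intro j
  rw [Functor.assoc, prodToPi, Functor.pi'_eval, Functor.pi'_eval]
  by_cases h : j = 0
  · rw [if_pos h, if_pos h]; rfl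
  · rw [if_neg h, if_neg h]; rfl

lemma P2 (A : 𝒜) : Prod.sectR A 𝒜 ⋙ prodToPi 𝒜 n
    = Functor.pi' (fun _ : Fin n => 𝟭 𝒜) ⋙ insF n A := by
  apply Functor.pi_ext
  intro j
  rw [Functor.assoc, Functor.assoc, prodToPi, insF, Functor.pi'_eval, Functor.pi'_eval]
  by_cases h : j = 0
  · rw [if_pos h, dif_pos h]; rfl
  · rw [if_neg h, dif_neg h, Functor.pi'_eval]; rfl

lemma P3 (A : 𝒜) (Xn : Fin n → 𝒜) (i : Fin n) :
    Functor.pi' (fun k : Fin n => if k = i then 𝟭 𝒜 else (Functor.const 𝒜).obj (Xn k)) ⋙ insF n A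
      = Functor.pi' (fun j : Fin (n + 1) =>
          if j = i.succ then 𝟭 𝒜
          else (Functor.const 𝒜).obj (if h : j = 0 then A else Xn (j.pred h))) := by
  apply Functor.pi_ext
  intro j
  rw [Functor.assoc, insF, Functor.pi'_eval, Functor.pi'_eval]
  by_cases h : j = 0
  · rw [dif_pos h, if_neg (by rw [h]; exact (Fin.succ_ne_zero i).symm), dif_pos h]
    rfl
  · rw [dif_neg h, Functor.pi'_eval]
    by_cases hj : j = i.succ
    · subst hj
      rw [if_pos (by simp), if_pos rfl]
    · rw [if_neg (fun e => hj (by rw [← Fin.succ_pred j h, e])), if_neg hj, dif_neg h]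

end PiEq

lemma diag_pres {𝒜 : Type*} [Category 𝒜] [HasCoequalizers 𝒜] :
    ∀ (n : ℕ) (G : (∀ _ : Fin n, 𝒜) ⥤ 𝒜),
      (∀ (X : Fin n → 𝒜) (i : Fin n),
        PreservesReflexiveCoequalizersFun (partialFunctor G X i)) →
      PreservesReflexiveCoequalizersFun (Functor.pi' (fun _ : Fin n => 𝟭 𝒜) ⋙ G)
  | 0 => fun G _ => by
    intro X Y d₀ d₁ hp
    set Φ := Functor.pi' (fun _ : Fin 0 => 𝟭 𝒜) ⋙ G with hΦ
    have hiso : ∀ {A B : 𝒜} (f : A ⟶ B), IsIso (Φ.map f) := by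
      intro A B f
      haveI : IsIso ((Functor.pi' (fun _ : Fin 0 => 𝟭 𝒜)).map f) := by
        rw [isIso_pi_iff]
        intro i
        exact i.elim0
      show IsIso (G.map ((Functor.pi' (fun _ : Fin 0 => 𝟭 𝒜)).map f))
      infer_instance
    have heq : Φ.map d₀ = Φ.map d₁ :=
      congrArg G.map (funext fun i => i.elim0)
    set q := coequalizer.π d₀ d₁ with hq
    have hw : d₀ ≫ q = d₁ ≫ q := coequalizer.condition d₀ d₁
    haveI := hiso q
    suffices main : IsColimit (Cofork.ofπ (Φ.map q)
        (by rw [← Functor.map_comp, ← Functor.map_comp, hw]) :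
        Cofork (Φ.map d₀) (Φ.map d₁)) by
      exact preservesColimit_of_preserves_colimit_cocone (coequalizerIsCoequalizer d₀ d₁)
        ((isColimitMapCoconeCoforkEquiv Φ hw).symm main)
    refine Cofork.IsColimit.mk' _ (fun c => ⟨inv (Φ.map q) ≫ c.π, by simp, fun {m} hm => ?_⟩)
    rw [← hm]
    simp
  | (n + 1) => fun G hrefl => by
    intro X Y d₀ d₁ hp
    -- the second-variable partial functors
    have h2 : ∀ B : 𝒜,
        PreservesColimit (parallelPair d₀ d₁) (Prod.sectL 𝒜 B ⋙ (prodToPi 𝒜 n ⋙ G)) := by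
      intro B
      have E1 : Prod.sectL 𝒜 B ⋙ (prodToPi 𝒜 n ⋙ G) = partialFunctor G (fun _ => B) 0 :=
        congrArg (· ⋙ G) (P1 B)
      rw [E1]
      exact hrefl (fun _ => B) 0 d₀ d₁ hp
    -- the first-variable (diagonal of the remaining n slots) functors
    have h1 : ∀ A : 𝒜,
        PreservesColimit (parallelPair d₀ d₁) (Prod.sectR A 𝒜 ⋙ (prodToPi 𝒜 n ⋙ G)) := by
      intro A
      have hreflA : ∀ (Xn : Fin n → 𝒜) (i : Fin n),
          PreservesReflexiveCoequalizersFun (partialFunctor (insF n A ⋙ G) Xn i) := by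
        intro Xn i
        have E3 : partialFunctor (insF n A ⋙ G) Xn i
            = partialFunctor G (fun j => if h : j = 0 then A else Xn (j.pred h)) i.succ :=
          congrArg (· ⋙ G) (P3 A Xn i)
        rw [E3]
        exact hrefl _ i.succ
      have ih := diag_pres n (insF n A ⋙ G) hreflA d₀ d₁ hp
      have E2 : Prod.sectR A 𝒜 ⋙ (prodToPi 𝒜 n ⋙ G)
          = Functor.pi' (fun _ : Fin n => 𝟭 𝒜) ⋙ (insF n A ⋙ G) :=
        congrArg (· ⋙ G) (P2 A)
      rw [E2]
      exact ih
    have key := bifunctor_preservesColimit (prodToPi 𝒜 n ⋙ G) d₀ d₁ hp h1 h2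
    have E4 : Functor.diag 𝒜 ⋙ (prodToPi 𝒜 n ⋙ G)
        = Functor.pi' (fun _ : Fin (n + 1) => 𝟭 𝒜) ⋙ G :=
      congrArg (· ⋙ G) P4
    rwa [E4] at key

/-- a split analytic functor `f = ⊕ₙ fₙ ∘ Δₙ` — the (pointwise)
coproduct of the homogeneous polynomial functors `fₙ ∘ Δₙ` with each `fₙ`
additive in each variable — preserves reflexive coequalizers, provided each
partial functor of each `fₙ` preserves reflexive coequalizers. -/
theorem statement8 {𝒜 : Type*} [Category 𝒜] [Abelian 𝒜] [HasCountableCoproducts 𝒜]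
    (G : ∀ n : ℕ, (∀ _ : Fin n, 𝒜) ⥤ 𝒜)
    (hadd : ∀ (n : ℕ) (X : Fin n → 𝒜) (i : Fin n), (partialFunctor (G n) X i).Additive)
    (hrefl : ∀ (n : ℕ) (X : Fin n → 𝒜) (i : Fin n),
      PreservesReflexiveCoequalizersFun (partialFunctor (G n) X i)) :
    PreservesReflexiveCoequalizersFun
      (∐ fun n : ℕ => Functor.pi' (fun _ : Fin n => 𝟭 𝒜) ⋙ G n) := by
  intro X Y d₀ d₁ hp
  exact preservesColimit_colimit_functor
    (Discrete.functor fun n : ℕ => Functor.pi' (fun _ : Fin n => 𝟭 𝒜) ⋙ G n)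
    (parallelPair d₀ d₁)
    (fun j => diag_pres j.as (G j.as) (hrefl j.as) d₀ d₁ hp)
end

section
/- Let f_n : A^n → A be a functor on an abelian category A, additive in each variable, and let d₀, d₁ : X₁ → X₀ be a reflexive pair with common section s₀. Then the subobject Σ_{i=1}^n Im f_n(X₀,…, (d₀−d₁)(X₁) at place i, …, X₀) of f_n(X₀,…,X₀) equals Im(f_n(d₀,…,d₀) − f_n(d₁,…,d₁)). -/
/-!
Write `f(φ₁,…,φₙ)` for `G.map φ`. Since `s₀` is a common section of `d₀` and `d₁`, additivity
in the `i`-th variable factors `f(X₀,…,d₀ − d₁ at i,…,X₀)` as `f(s₀,…,s₀, id at i, s₀,…,s₀)`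
followed by `f(d₀,…,d₀) − f(d₁,…,d₁)`, which gives `≤`. Conversely, `f(d₀,…,d₀) − f(d₁,…,d₁)`
telescopes over the staircase morphisms `(d₀,…,d₀,d₁,…,d₁)`, and by additivity the `i`-th
difference is `f(d₀,…,d₀, id at i, d₁,…,d₁)` followed by `f(X₀,…,d₀ − d₁ at i,…,X₀)`, which
gives `≥`.
-/

open CategoryTheory Limits

/-- The morphism `(X₀,…, X₁ at place i, …, X₀) ⟶ (X₀,…,X₀)` in `𝒜^n` whose
`i`-th component is `d₀ - d₁` and whose other components are identities. -/
noncomputable def deltaHom {𝒜 : Type*} [Category 𝒜] [Abelian 𝒜] {n : ℕ}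
    {X₁ X₀ : 𝒜} (d₀ d₁ : X₁ ⟶ X₀) (i : Fin n) :
    (Function.update (fun _ => X₀ : Fin n → 𝒜) i X₁ : ∀ _ : Fin n, 𝒜) ⟶ (fun _ => X₀) :=
  fun j =>
    if h : j = i then
      eqToHom (by subst h; simp) ≫ (d₀ - d₁)
    else
      eqToHom (by simp [Function.update_of_ne h])

section

variable {𝒜 : Type*} [Category 𝒜] {n : ℕ}

noncomputable def singleHom {X₁ X₀ : 𝒜} (φ : X₁ ⟶ X₀) (i : Fin n) :
    (Function.update (fun _ => X₀ : Fin n → 𝒜) i X₁ : ∀ _ : Fin n, 𝒜) ⟶ (fun _ => X₀) :=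
  fun j =>
    if h : j = i then
      eqToHom (by subst h; simp) ≫ φ
    else
      eqToHom (by simp [Function.update_of_ne h])

theorem eqToHom_comp_map_comp_eqToHom_of_eq {C D : Type*} [Category C] [Category D]
    {F F' : C ⥤ D} (hF : F = F') {X Y : C} (φ : X ⟶ Y) {A B : D} (e₁ : A = F.obj X)
    (e₂ : F.obj Y = B) :
    eqToHom e₁ ≫ F.map φ ≫ eqToHom e₂ =
      eqToHom (e₁.trans (by rw [hF])) ≫ F'.map φ ≫
        eqToHom ((show F'.obj Y = F.obj Y by rw [hF]).trans e₂) := by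
  subst hF
  rfl

theorem singleHom_eq_pi'_map {X₁ X₀ : 𝒜} (φ : X₁ ⟶ X₀) (i : Fin n) :
    singleHom φ i = eqToHom (by funext j; by_cases h : j = i <;> simp [h]) ≫
      (Functor.pi' fun j => if j = i then 𝟭 𝒜 else (Functor.const 𝒜).obj X₀).map φ ≫
        eqToHom (by funext j; by_cases h : j = i <;> simp [h]) := by
  funext j
  simp only [Pi.comp_apply, Functor.eqToHom_proj, Functor.pi'_map, singleHom]
  by_cases h : j = i
  · subst h
    erw [eqToHom_comp_map_comp_eqToHom_of_eq (if_pos rfl)]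
    simp
  · erw [eqToHom_comp_map_comp_eqToHom_of_eq (if_neg h)]
    simp [h]

theorem map_singleHom (G : (∀ _ : Fin n, 𝒜) ⥤ 𝒜) {X₁ X₀ : 𝒜} (φ : X₁ ⟶ X₀) (i : Fin n) :
    G.map (singleHom φ i) =
      eqToHom (show G.obj (Function.update (fun _ => X₀) i X₁) =
          (partialFunctor G (fun _ => X₀) i).obj X₁ from
        congrArg G.obj (funext fun j => by by_cases h : j = i <;> simp [h])) ≫
        (partialFunctor G (fun _ => X₀) i).map φ ≫
          eqToHom (show (partialFunctor G (fun _ => X₀) i).obj X₀ = G.obj fun _ => X₀ from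
            congrArg G.obj (funext fun j => by by_cases h : j = i <;> simp [h])) := by
  rw [singleHom_eq_pi'_map, G.map_comp, G.map_comp, eqToHom_map, eqToHom_map]
  rfl

theorem map_singleHom_sub [Preadditive 𝒜] (G : (∀ _ : Fin n, 𝒜) ⥤ 𝒜) {X₁ X₀ : 𝒜} (i : Fin n)
    [(partialFunctor G (fun _ => X₀) i).Additive] (φ ψ : X₁ ⟶ X₀) :
    G.map (singleHom (φ - ψ) i) = G.map (singleHom φ i) - G.map (singleHom ψ i) := by
  rw [map_singleHom, map_singleHom, map_singleHom, Functor.map_sub, Preadditive.sub_comp,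
    Preadditive.comp_sub]

theorem deltaHom_eq_singleHom [Abelian 𝒜] {X₁ X₀ : 𝒜} (d₀ d₁ : X₁ ⟶ X₀) (i : Fin n) :
    deltaHom d₀ d₁ i = singleHom (d₀ - d₁) i := rfl

noncomputable def sectionHom {X₁ X₀ : 𝒜} (s : X₀ ⟶ X₁) (i : Fin n) :
    (Function.update (fun _ => X₀ : Fin n → 𝒜) i X₁ : ∀ _ : Fin n, 𝒜) ⟶ (fun _ => X₁) :=
  fun j =>
    if h : j = i then
      eqToHom (by subst h; simp)
    else
      eqToHom (by simp [Function.update_of_ne h]) ≫ s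

theorem sectionHom_comp {X₁ X₀ : 𝒜} {s : X₀ ⟶ X₁} {d : X₁ ⟶ X₀} (hs : s ≫ d = 𝟙 X₀)
    (i : Fin n) :
    sectionHom s i ≫ (fun _ => d : (fun _ => X₁ : ∀ _ : Fin n, 𝒜) ⟶ (fun _ => X₀)) =
      singleHom d i := by
  funext j
  by_cases h : j = i
  · subst h
    simp [sectionHom, singleHom]
  · simp [sectionHom, singleHom, h, hs]

def stairHom {X₁ X₀ : 𝒜} (d₀ d₁ : X₁ ⟶ X₀) (k : ℕ) :
    (fun _ => X₁ : ∀ _ : Fin n, 𝒜) ⟶ (fun _ => X₀) :=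
  fun j => if (j : ℕ) < k then d₀ else d₁

theorem stairHom_zero {X₁ X₀ : 𝒜} (d₀ d₁ : X₁ ⟶ X₀) :
    stairHom (n := n) d₀ d₁ 0 = fun _ => d₁ := by
  funext j
  simp [stairHom]

theorem stairHom_self {X₁ X₀ : 𝒜} (d₀ d₁ : X₁ ⟶ X₀) :
    stairHom (n := n) d₀ d₁ n = fun _ => d₀ := by
  funext j
  simp [stairHom]

noncomputable def stairSplitHom {X₁ X₀ : 𝒜} (d₀ d₁ : X₁ ⟶ X₀) (i : Fin n) :
    (fun _ => X₁ : ∀ _ : Fin n, 𝒜) ⟶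
      (Function.update (fun _ => X₀ : Fin n → 𝒜) i X₁ : ∀ _ : Fin n, 𝒜) :=
  fun j =>
    if h : j = i then
      eqToHom (by subst h; simp)
    else
      (if (j : ℕ) < i then d₀ else d₁) ≫ eqToHom (by simp [Function.update_of_ne h])

theorem stairSplitHom_comp_singleHom_left {X₁ X₀ : 𝒜} (d₀ d₁ : X₁ ⟶ X₀) (i : Fin n) :
    stairSplitHom d₀ d₁ i ≫ singleHom d₀ i = stairHom d₀ d₁ (i + 1) := by
  funext j
  by_cases h : j = i
  · subst h
    simp [stairSplitHom, singleHom, stairHom]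
  · have : (j : ℕ) < i + 1 ↔ (j : ℕ) < i := by grind [Fin.val_inj]
    simp [stairSplitHom, singleHom, stairHom, h, this]

theorem stairSplitHom_comp_singleHom_right {X₁ X₀ : 𝒜} (d₀ d₁ : X₁ ⟶ X₀) (i : Fin n) :
    stairSplitHom d₀ d₁ i ≫ singleHom d₁ i = stairHom d₀ d₁ i := by
  funext j
  by_cases h : j = i
  · subst h
    simp [stairSplitHom, singleHom, stairHom]
  · simp [stairSplitHom, singleHom, stairHom, h]

variable [Abelian 𝒜]

theorem map_deltaHom_eq_comp (G : (∀ _ : Fin n, 𝒜) ⥤ 𝒜) {X₁ X₀ : 𝒜} (i : Fin n)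
    [(partialFunctor G (fun _ => X₀) i).Additive] {d₀ d₁ : X₁ ⟶ X₀} {s₀ : X₀ ⟶ X₁}
    (hs₀ : s₀ ≫ d₀ = 𝟙 X₀) (hs₁ : s₀ ≫ d₁ = 𝟙 X₀) :
    G.map (deltaHom d₀ d₁ i) = G.map (sectionHom s₀ i) ≫
      (G.map (fun _ => d₀ : (fun _ => X₁ : ∀ _ : Fin n, 𝒜) ⟶ (fun _ => X₀)) -
        G.map (fun _ => d₁ : (fun _ => X₁ : ∀ _ : Fin n, 𝒜) ⟶ (fun _ => X₀))) := by
  rw [Preadditive.comp_sub, ← G.map_comp, ← G.map_comp, sectionHom_comp hs₀,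
    sectionHom_comp hs₁, deltaHom_eq_singleHom, map_singleHom_sub]

theorem map_const_sub_eq_sum (G : (∀ _ : Fin n, 𝒜) ⥤ 𝒜) {X₁ X₀ : 𝒜}
    [∀ i, (partialFunctor G (fun _ => X₀) i).Additive] (d₀ d₁ : X₁ ⟶ X₀) :
    G.map (fun _ => d₀ : (fun _ => X₁ : ∀ _ : Fin n, 𝒜) ⟶ (fun _ => X₀)) -
        G.map (fun _ => d₁ : (fun _ => X₁ : ∀ _ : Fin n, 𝒜) ⟶ (fun _ => X₀)) =
      ∑ i : Fin n, G.map (stairSplitHom d₀ d₁ i) ≫ G.map (deltaHom d₀ d₁ i) := by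
  have step (i : Fin n) : G.map (stairSplitHom d₀ d₁ i) ≫ G.map (deltaHom d₀ d₁ i) =
      G.map (stairHom d₀ d₁ (i + 1)) - G.map (stairHom d₀ d₁ i) := by
    rw [deltaHom_eq_singleHom, map_singleHom_sub, Preadditive.comp_sub, ← G.map_comp,
      ← G.map_comp, stairSplitHom_comp_singleHom_left, stairSplitHom_comp_singleHom_right]
  simp only [step]
  rw [Fin.sum_univ_eq_sum_range (fun k => G.map (stairHom d₀ d₁ (k + 1)) -
    G.map (stairHom d₀ d₁ k)), Finset.sum_range_sub (fun k => G.map (stairHom d₀ d₁ k)),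
    stairHom_self, stairHom_zero]

theorem imageSubobject_sum_le_sup {X Y : 𝒜} {ι : Type*} (s : Finset ι) (f : ι → (X ⟶ Y)) :
    imageSubobject (∑ i ∈ s, f i) ≤ s.sup fun i => imageSubobject (f i) := by
  refine imageSubobject_le _ (∑ i ∈ s.attach, factorThruImageSubobject (f i) ≫
    Subobject.ofLE _ _ (Finset.le_sup (f := fun i => imageSubobject (f i)) i.2)) ?_
  rw [Preadditive.sum_comp, ← Finset.sum_attach s f]
  refine Finset.sum_congr rfl fun i _ => ?_
  rw [Category.assoc, Subobject.ofLE_arrow, imageSubobject_arrow_comp]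

end

/-- for `f_n : 𝒜^n → 𝒜` additive in each variable and a reflexive
pair `d₀, d₁ : X₁ ⟶ X₀` with common section `s₀`, the sum of the images of the
maps `f_n(X₀,…,(d₀−d₁)(X₁) at place i,…,X₀)` equals the image of
`f_n(d₀,…,d₀) − f_n(d₁,…,d₁)` as subobjects of `f_n(X₀,…,X₀)`. -/
theorem statement9 {𝒜 : Type*} [Category 𝒜] [Abelian 𝒜] {n : ℕ}
    (G : (∀ _ : Fin n, 𝒜) ⥤ 𝒜)
    (hadd : ∀ (X : Fin n → 𝒜) (i : Fin n), (partialFunctor G X i).Additive)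
    {X₁ X₀ : 𝒜} (d₀ d₁ : X₁ ⟶ X₀) (s₀ : X₀ ⟶ X₁)
    (hs₀ : s₀ ≫ d₀ = 𝟙 X₀) (hs₁ : s₀ ≫ d₁ = 𝟙 X₀) :
    (Finset.univ.sup fun i : Fin n => imageSubobject (G.map (deltaHom d₀ d₁ i))) =
      imageSubobject
        (G.map (fun _ => d₀ : (fun _ => X₁ : ∀ _ : Fin n, 𝒜) ⟶ (fun _ => X₀)) -
          G.map (fun _ => d₁ : (fun _ => X₁ : ∀ _ : Fin n, 𝒜) ⟶ (fun _ => X₀))) := by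
  have := hadd fun _ => X₀
  apply le_antisymm
  · refine Finset.sup_le fun i _ => ?_
    rw [map_deltaHom_eq_comp G i hs₀ hs₁]
    exact imageSubobject_comp_le _ _
  · rw [map_const_sub_eq_sum]
    exact (imageSubobject_sum_le_sup _ _).trans
      (Finset.sup_mono_fun fun i _ => imageSubobject_comp_le _ _)
end
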